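/- Fix a real Δ > 3 and vertices x, y ∈ V; set D_{−1} = 0 and D_i = W(x, y) · ∑_{j=0}^{i} Δ^j for i ≥ 0. Let 0 ≤ i ≤ k−1 with A_i ≠ ∅, and suppose d_G(x, y) ≤ D_i and d_H(x, p_i(x)) ≤ (2Δ/(Δ−3)) · D_{i−1}. Let m = max{Δ · D_{i−1}, d_G(x, y)}. Then at least one of the following holds: (1) d_H(x, y) ≤ (3 + 8/(Δ−3)) · m; or (2) A_{i+1} ≠ ∅ and d_H(x, p_{i+1}(x)) ≤ (2Δ/(Δ−3)) · D_i. -/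

import Mathlib

open scoped ENNReal Classical

namespace ASP

variable {V : Type*}

noncomputable def wWeight {G : SimpleGraph V} (w : V → V → ℝ≥0∞) {x y : V}
    (p : G.Walk x y) : ℝ≥0∞ :=
  (p.darts.map fun d => w d.toProd.1 d.toProd.2).sum

noncomputable def gdist (G : SimpleGraph V) (w : V → V → ℝ≥0∞) (x y : V) : ℝ≥0∞ :=
  ⨅ p : G.Walk x y, wWeight w p

noncomputable def maxW {G : SimpleGraph V} (w : V → V → ℝ≥0∞) {x y : V}
    (p : G.Walk x y) : ℝ≥0∞ :=
  (p.darts.map fun d => w d.toProd.1 d.toProd.2).foldr max 0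

/-- The bunch of a vertex `u` of level `i`: all vertices of `A i` strictly closer to `u` than
`A (i+1)` (vacuously all of `A i` if `A (i+1) = ∅`), together with the pivots of all
nonempty higher levels. -/
def bunch (G : SimpleGraph V) (w : V → V → ℝ≥0∞) (A : ℕ → Set V) (pv : ℕ → V → V)
    (k i : ℕ) (u : V) : Set V :=
  {v | v ∈ A i ∧ ∀ a ∈ A (i + 1), gdist G w u v < gdist G w u a} ∪
    {v | ∃ j, i < j ∧ j < k ∧ (A j).Nonempty ∧ v = pv j u}

/-- The emulator graph `H`: an edge `{u, v}` for every `u ∈ A i \ A (i+1)` and `v ∈ B(u)`. -/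
def emulGraph (G : SimpleGraph V) (w : V → V → ℝ≥0∞) (A : ℕ → Set V) (pv : ℕ → V → V)
    (k : ℕ) : SimpleGraph V where
  Adj u v := u ≠ v ∧ ∃ i, (u ∈ A i ∧ u ∉ A (i + 1) ∧ v ∈ bunch G w A pv k i u) ∨
      (v ∈ A i ∧ v ∉ A (i + 1) ∧ u ∈ bunch G w A pv k i v)
  symm := ⟨fun u v h => ⟨h.1.symm, h.2.imp fun _ hi => hi.symm⟩⟩
  loopless := ⟨fun u h => h.1 rfl⟩

/-!
Let `p = p_i(x)`, let `ℓ ≥ i` be the level of `p` (`p ∈ A_ℓ \ A_{ℓ+1}`) and `v = p_ℓ(y)`. If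
`C ≥ d_H(x, p)`, the triangle inequality gives `d_G(y, v) ≤ d_G(y, p) ≤ d_G(x, y) + C` and
`d_G(p, v) ≤ 2 d_G(x, y) + 2 C`. Either `v ∈ B(p)`, and the `H`-path `x → p → v → y` has length at
most `3 d_G(x, y) + 4 C`; or some `t ∈ A_{ℓ+1} ⊆ A_{i+1}` is no farther from `p` than `v`, and
then the `H`-edge from `x` to `p_{i+1}(x)` has length at most `2 d_G(x, y) + 3 C`. Edges to pivots
may be missing when a vertex already lies in the pivot's level, but then the two are at
`G`-distance `0`, and such pairs are at `H`-distance `0` as well. With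
`C = (2Δ/(Δ-3)) D_{i-1}` and `D_i = Δ D_{i-1} + W(x, y)`, the two bounds are those of the
statement.
-/

section WeightedDistance

variable {G : SimpleGraph V} {w : V → V → ℝ≥0∞}

lemma wWeight_append {x y z : V} (p : G.Walk x y) (q : G.Walk y z) :
    wWeight w (p.append q) = wWeight w p + wWeight w q := by
  simp [wWeight]

lemma wWeight_reverse (hwsym : ∀ u v, G.Adj u v → w u v = w v u) {x y : V} (p : G.Walk x y) :
    wWeight w p.reverse = wWeight w p := by
  unfold wWeight
  rw [SimpleGraph.Walk.darts_reverse, List.map_reverse, List.sum_reverse, List.map_map]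
  refine congrArg List.sum (List.map_congr_left fun d _ => ?_)
  exact (hwsym _ _ d.adj).symm

lemma gdist_le_wWeight {x y : V} (p : G.Walk x y) : gdist G w x y ≤ wWeight w p :=
  iInf_le _ p

lemma gdist_self (x : V) : gdist G w x x = 0 :=
  nonpos_iff_eq_zero.mp (by simpa [wWeight] using gdist_le_wWeight (w := w) (.nil : G.Walk x x))

lemma gdist_le_of_adj {x y : V} (h : G.Adj x y) : gdist G w x y ≤ w x y := by
  simpa [wWeight] using gdist_le_wWeight (w := w) (.cons h .nil)

lemma gdist_triangle (x y z : V) :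
    gdist G w x z ≤ gdist G w x y + gdist G w y z := by
  rcases isEmpty_or_nonempty (G.Walk x y) with h | h
  · simp [gdist, iInf_of_empty]
  rcases isEmpty_or_nonempty (G.Walk y z) with h' | h'
  · simp [gdist, iInf_of_empty]
  simp only [gdist, ENNReal.iInf_add, ENNReal.add_iInf]
  exact le_iInf₂ fun q p => (gdist_le_wWeight (p.append q)).trans_eq (wWeight_append p q)

lemma gdist_comm (hwsym : ∀ u v, G.Adj u v → w u v = w v u) (x y : V) :
    gdist G w x y = gdist G w y x := by
  have key (a b : V) : gdist G w a b ≤ gdist G w b a :=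
    le_iInf fun p => (gdist_le_wWeight p.reverse).trans_eq (wWeight_reverse hwsym p)
  exact le_antisymm (key x y) (key y x)

lemma le_gdist_of_triangle {ω : V → V → ℝ≥0∞} (hrefl : ∀ a, ω a a = 0)
    (htri : ∀ a b c, ω a c ≤ ω a b + ω b c) (x y : V) : ω x y ≤ gdist G ω x y := by
  refine le_iInf fun p => ?_
  induction p with
  | nil => simp [hrefl]
  | @cons a b c h p ih =>
    calc ω a c ≤ ω a b + ω b c := htri a b c
      _ ≤ ω a b + wWeight ω p := by gcongr
      _ = wWeight ω (.cons h p) := by simp [wWeight]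

end WeightedDistance

structure IsPivotHierarchy (G : SimpleGraph V) (w : V → V → ℝ≥0∞) (k : ℕ) (A : ℕ → Set V)
    (pv : ℕ → V → V) : Prop where
  zero_eq_univ : A 0 = Set.univ
  succ_subset : ∀ i, A (i + 1) ⊆ A i
  eq_empty : A k = ∅
  pivot_mem : ∀ i < k, ∀ v, (A i).Nonempty → pv i v ∈ A i
  pivot_le : ∀ i < k, ∀ v, (A i).Nonempty → ∀ a ∈ A i, gdist G w v (pv i v) ≤ gdist G w v a

namespace IsPivotHierarchy

variable {G : SimpleGraph V} {w : V → V → ℝ≥0∞} {k : ℕ} {A : ℕ → Set V} {pv : ℕ → V → V}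

lemma antitone (hA : IsPivotHierarchy G w k A pv) : Antitone A :=
  antitone_nat_of_succ_le hA.succ_subset

lemma lt_of_nonempty (hA : IsPivotHierarchy G w k A pv) {j : ℕ} (hj : (A j).Nonempty) : j < k := by
  by_contra! hkj
  simpa [hA.eq_empty] using hA.antitone hkj hj.some_mem

lemma exists_level (hA : IsPivotHierarchy G w k A pv) (u : V) : ∃ ℓ, u ∈ A ℓ ∧ u ∉ A (ℓ + 1) := by
  by_contra! h
  have hall : ∀ n, u ∈ A n := fun n =>
    Nat.rec (by simp [hA.zero_eq_univ]) (fun n hn => h n hn) n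
  simpa [hA.eq_empty] using hall k

lemma pivot_mem_of_nonempty (hA : IsPivotHierarchy G w k A pv) {j : ℕ} (hj : (A j).Nonempty)
    (v : V) : pv j v ∈ A j :=
  hA.pivot_mem j (hA.lt_of_nonempty hj) v hj

lemma gdist_pivot_le (hA : IsPivotHierarchy G w k A pv) {j : ℕ} {v a : V} (ha : a ∈ A j) :
    gdist G w v (pv j v) ≤ gdist G w v a :=
  hA.pivot_le j (hA.lt_of_nonempty ⟨a, ha⟩) v ⟨a, ha⟩ a ha

end IsPivotHierarchy

section Emulator

variable {G : SimpleGraph V} {w : V → V → ℝ≥0∞} {k : ℕ} {A : ℕ → Set V} {pv : ℕ → V → V}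

local notation "dG" => gdist G w
local notation "dH" => gdist (emulGraph G w A pv k) (gdist G w)

lemma gdist_le_emulDist (x y : V) : dG x y ≤ dH x y :=
  le_gdist_of_triangle gdist_self gdist_triangle x y

lemma emulDist_comm (hwsym : ∀ u v, G.Adj u v → w u v = w v u) (x y : V) : dH x y = dH y x :=
  gdist_comm (fun u v _ => gdist_comm hwsym u v) x y

lemma emulDist_le_of_forall_lt {ℓ : ℕ} {u v : V} (hu : u ∈ A ℓ) (hu' : u ∉ A (ℓ + 1))
    (hv : v ∈ A ℓ) (hlt : ∀ t ∈ A (ℓ + 1), dG u v < dG u t) : dH u v ≤ dG u v := by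
  rcases eq_or_ne u v with rfl | hne
  · simp [gdist_self]
  exact gdist_le_of_adj ⟨hne, ℓ, .inl ⟨hu, hu', .inl ⟨hv, hlt⟩⟩⟩

lemma emulDist_pivot_le_of_lt (hA : IsPivotHierarchy G w k A pv) {ℓ j : ℕ} {u : V}
    (hu : u ∈ A ℓ) (hu' : u ∉ A (ℓ + 1)) (hℓj : ℓ < j) (hj : (A j).Nonempty) :
    dH u (pv j u) ≤ dG u (pv j u) := by
  have hne : u ≠ pv j u := fun h => hu' (hA.antitone hℓj (h ▸ hA.pivot_mem_of_nonempty hj u))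
  exact gdist_le_of_adj ⟨hne, ℓ, .inl ⟨hu, hu', .inr ⟨j, hℓj, hA.lt_of_nonempty hj, hj, rfl⟩⟩⟩

/-- Downward induction on `j`: two vertices of `A j` at `G`-distance `0` either both reach `A (j+1)`
along `H`-edges of length `0` to their pivots, or one of them has the other in its bunch. -/
lemma emulDist_eq_zero (hA : IsPivotHierarchy G w k A pv)
    (hwsym : ∀ u v, G.Adj u v → w u v = w v u) {a b : V} (hab : dG a b = 0) : dH a b = 0 := by
  suffices h : ∀ j ≤ k, ∀ a ∈ A j, ∀ b ∈ A j, dG a b = 0 → dH a b = 0 by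
    exact h 0 k.zero_le a (by simp [hA.zero_eq_univ]) b (by simp [hA.zero_eq_univ]) hab
  intro j hj
  induction hj using Nat.decreasingInduction with
  | self => simp [hA.eq_empty]
  | of_succ j hjk ih =>
    have climb : ∀ a ∈ A j, (∃ t ∈ A (j + 1), dG a t = 0) →
        ∃ a' ∈ A (j + 1), dG a a' = 0 ∧ dH a a' = 0 := by
      rintro a ha ⟨t, ht, hat⟩
      by_cases ha' : a ∈ A (j + 1)
      · exact ⟨a, ha', gdist_self a, gdist_self a⟩
      have hzero : dG a (pv (j + 1) a) = 0 :=
        nonpos_iff_eq_zero.mp ((hA.gdist_pivot_le ht).trans_eq hat)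
      refine ⟨pv (j + 1) a, hA.pivot_mem_of_nonempty ⟨t, ht⟩ a, hzero, nonpos_iff_eq_zero.mp ?_⟩
      exact (emulDist_pivot_le_of_lt hA ha ha' j.lt_succ_self ⟨t, ht⟩).trans_eq hzero
    have direct : ∀ a ∈ A j, ∀ b ∈ A j, (∀ t ∈ A (j + 1), dG a t ≠ 0) → dG a b = 0 →
        dH a b = 0 := fun a ha b hb hpos hab => nonpos_iff_eq_zero.mp <|
      (emulDist_le_of_forall_lt ha (fun ha' => hpos a ha' (gdist_self a)) hb
        fun t ht => hab ▸ pos_iff_ne_zero.mpr (hpos t ht)).trans_eq hab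
    intro a ha b hb hab
    by_cases hza : ∃ t ∈ A (j + 1), dG a t = 0
    · by_cases hzb : ∃ t ∈ A (j + 1), dG b t = 0
      · obtain ⟨a', ha', haa', hHaa'⟩ := climb a ha hza
        obtain ⟨b', hb', hbb', hHbb'⟩ := climb b hb hzb
        have ha'b' : dG a' b' = 0 := by
          refine nonpos_iff_eq_zero.mp ((gdist_triangle a' a b').trans ?_)
          rw [gdist_comm hwsym a' a, haa', zero_add]
          exact (gdist_triangle a b b').trans_eq (by rw [hab, hbb', add_zero])
        refine nonpos_iff_eq_zero.mp ((gdist_triangle a a' b).trans ?_)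
        rw [hHaa', zero_add]
        refine (gdist_triangle a' b' b).trans_eq ?_
        rw [ih a' ha' b' hb' ha'b', emulDist_comm hwsym b' b, hHbb', add_zero]
      · push Not at hzb
        rw [emulDist_comm hwsym]
        exact direct b hb a ha hzb (by rwa [gdist_comm hwsym])
    · push Not at hza
      exact direct a ha b hb hza hab

lemma emulDist_pivot_le (hA : IsPivotHierarchy G w k A pv)
    (hwsym : ∀ u v, G.Adj u v → w u v = w v u) {j : ℕ} (hj : (A j).Nonempty) (u : V) :
    dH u (pv j u) ≤ dG u (pv j u) := by
  obtain ⟨ℓ, hu, hu'⟩ := hA.exists_level u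
  rcases lt_or_ge ℓ j with hℓj | hjℓ
  · exact emulDist_pivot_le_of_lt hA hu hu' hℓj hj
  · have hzero : dG u (pv j u) = 0 :=
      nonpos_iff_eq_zero.mp ((hA.gdist_pivot_le (hA.antitone hjℓ hu)).trans_eq (gdist_self u))
    exact (emulDist_eq_zero hA hwsym hzero).trans_le zero_le

theorem emulDist_le_or_emulDist_pivot_succ_le (hA : IsPivotHierarchy G w k A pv)
    (hwsym : ∀ u v, G.Adj u v → w u v = w v u) {i : ℕ} (hAi : (A i).Nonempty) {x y : V}
    {C : ℝ≥0∞} (hC : dH x (pv i x) ≤ C) :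
    dH x y ≤ 3 * dG x y + 4 * C ∨
      ((A (i + 1)).Nonempty ∧ dH x (pv (i + 1) x) ≤ 2 * dG x y + 3 * C) := by
  set p := pv i x
  have hxp : dG x p ≤ C := (gdist_le_emulDist x p).trans hC
  obtain ⟨ℓ, hp, hp'⟩ := hA.exists_level p
  have hiℓ : i ≤ ℓ := by
    by_contra! h
    exact hp' (hA.antitone h (hA.pivot_mem_of_nonempty hAi x))
  set v := pv ℓ y
  have hyv : dG y v ≤ dG x y + C := calc
    dG y v ≤ dG y p := hA.gdist_pivot_le hp
    _ ≤ dG y x + dG x p := gdist_triangle _ _ _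
    _ ≤ dG x y + C := by rw [gdist_comm hwsym y x]; gcongr
  have hpv : dG p v ≤ 2 * dG x y + 2 * C := calc
    dG p v ≤ dG p x + dG x y + dG y v :=
      (gdist_triangle p y v).trans (by gcongr; exact gdist_triangle _ _ _)
    _ ≤ C + dG x y + (dG x y + C) := by rw [gdist_comm hwsym p x]; gcongr
    _ = 2 * dG x y + 2 * C := by ring
  by_cases hball : ∀ t ∈ A (ℓ + 1), dG p v < dG p t
  · left
    have hHpv : dH p v ≤ dG p v :=
      emulDist_le_of_forall_lt hp hp' (hA.pivot_mem_of_nonempty ⟨p, hp⟩ y) hball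
    have hHyv : dH y v ≤ dG y v := emulDist_pivot_le hA hwsym ⟨p, hp⟩ y
    calc dH x y ≤ dH x p + dH p v + dH v y :=
          (gdist_triangle x v y).trans (by gcongr; exact gdist_triangle _ _ _)
      _ ≤ C + (2 * dG x y + 2 * C) + (dG x y + C) := by
          rw [emulDist_comm hwsym v y]
          gcongr
          exacts [hHpv.trans hpv, hHyv.trans hyv]
      _ = 3 * dG x y + 4 * C := by ring
  · right
    push Not at hball
    obtain ⟨t, ht, hpt⟩ := hball
    have ht' : t ∈ A (i + 1) := hA.antitone (by omega) ht
    refine ⟨⟨t, ht'⟩, ?_⟩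
    calc dH x (pv (i + 1) x) ≤ dG x (pv (i + 1) x) := emulDist_pivot_le hA hwsym ⟨t, ht'⟩ x
      _ ≤ dG x t := hA.gdist_pivot_le ht'
      _ ≤ dG x p + dG p t := gdist_triangle _ _ _
      _ ≤ C + (2 * dG x y + 2 * C) := by gcongr; exact hpt.trans hpv
      _ = 2 * dG x y + 3 * C := by ring

end Emulator

section Arithmetic

open Finset

lemma three_mul_add_four_mul_le {Δ : ℝ} (hΔ : 3 < Δ) (a D : ℝ≥0∞) :
    3 * a + 4 * (ENNReal.ofReal (2 * Δ / (Δ - 3)) * D) ≤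
      ENNReal.ofReal (3 + 8 / (Δ - 3)) * max (ENNReal.ofReal Δ * D) a := by
  have h3 : 0 < Δ - 3 := by linarith
  have hfour : 4 * ENNReal.ofReal (2 * Δ / (Δ - 3)) =
      ENNReal.ofReal (8 / (Δ - 3)) * ENNReal.ofReal Δ := by
    rw [← ENNReal.ofReal_mul (by positivity), ← ENNReal.ofReal_ofNat 4,
      ← ENNReal.ofReal_mul (by norm_num)]
    congr 1
    field_simp
    ring
  rw [ENNReal.ofReal_add (by norm_num) (by positivity), add_mul, ENNReal.ofReal_ofNat,
    ← mul_assoc, hfour, mul_assoc]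
  exact add_le_add (by gcongr; exact le_max_right _ _) (by gcongr; exact le_max_left _ _)

lemma two_mul_geom_sum_succ_add_le {Δ : ℝ} (hΔ : 3 < Δ) (i : ℕ) :
    2 * ∑ j ∈ range (i + 1), Δ ^ j + 3 * (2 * Δ / (Δ - 3) * ∑ j ∈ range i, Δ ^ j) ≤
      2 * Δ / (Δ - 3) * ∑ j ∈ range (i + 1), Δ ^ j := by
  have h3 : 0 < Δ - 3 := by linarith
  rw [geom_sum_succ, ← sub_nonneg]
  have hslack : 2 * Δ / (Δ - 3) * (Δ * ∑ j ∈ range i, Δ ^ j + 1) -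
      (2 * (Δ * ∑ j ∈ range i, Δ ^ j + 1) + 3 * (2 * Δ / (Δ - 3) * ∑ j ∈ range i, Δ ^ j)) =
      6 / (Δ - 3) := by
    field_simp
    ring
  rw [hslack]
  positivity

lemma two_mul_add_three_mul_le {Δ : ℝ} (hΔ : 3 < Δ) (i : ℕ) {a W : ℝ≥0∞}
    (ha : a ≤ W * ENNReal.ofReal (∑ j ∈ range (i + 1), Δ ^ j)) :
    2 * a + 3 * (ENNReal.ofReal (2 * Δ / (Δ - 3)) * (W * ENNReal.ofReal (∑ j ∈ range i, Δ ^ j))) ≤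
      ENNReal.ofReal (2 * Δ / (Δ - 3)) * (W * ENNReal.ofReal (∑ j ∈ range (i + 1), Δ ^ j)) := by
  set c := 2 * Δ / (Δ - 3)
  set S := ∑ j ∈ range i, Δ ^ j
  set S' := ∑ j ∈ range (i + 1), Δ ^ j
  have hc : 0 ≤ c := div_nonneg (by linarith) (by linarith)
  have hS : 0 ≤ S := sum_nonneg fun j _ => pow_nonneg (by linarith) j
  have hS' : 0 ≤ S' := sum_nonneg fun j _ => pow_nonneg (by linarith) j
  calc 2 * a + 3 * (ENNReal.ofReal c * (W * ENNReal.ofReal S))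
      ≤ 2 * (W * ENNReal.ofReal S') + 3 * (ENNReal.ofReal c * (W * ENNReal.ofReal S)) := by
        gcongr
    _ = W * ENNReal.ofReal (2 * S' + 3 * (c * S)) := by
        rw [ENNReal.ofReal_add (by positivity) (by positivity), ENNReal.ofReal_mul (by norm_num),
          ENNReal.ofReal_mul (by norm_num), ENNReal.ofReal_mul hc, ENNReal.ofReal_ofNat,
          ENNReal.ofReal_ofNat]
        ring
    _ ≤ W * ENNReal.ofReal (c * S') := by
        gcongr
        exact two_mul_geom_sum_succ_add_le hΔ i
    _ = ENNReal.ofReal c * (W * ENNReal.ofReal S') := by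
        rw [ENNReal.ofReal_mul hc]
        ring

end Arithmetic

theorem statement8_general (G : SimpleGraph V)
    (w : V → V → ℝ≥0∞) (hwsym : ∀ u v, G.Adj u v → w u v = w v u)
    (k : ℕ) (A : ℕ → Set V) (hA0 : A 0 = Set.univ)
    (hAnest : ∀ i, A (i + 1) ⊆ A i) (hAk : A k = ∅)
    (pv : ℕ → V → V)
    (hpv : ∀ i, i < k → ∀ v : V, (A i).Nonempty →
      pv i v ∈ A i ∧ ∀ a ∈ A i, gdist G w v (pv i v) ≤ gdist G w v a)
    (Δ : ℝ) (hΔ : 3 < Δ) (x y : V) (Wxy : ℝ≥0∞)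
    (i : ℕ) (hAi : (A i).Nonempty)
    (hclose : gdist G w x y ≤ Wxy * ENNReal.ofReal (∑ j ∈ Finset.range (i + 1), Δ ^ j))
    (hpiv : gdist (emulGraph G w A pv k) (gdist G w) x (pv i x) ≤
      ENNReal.ofReal (2 * Δ / (Δ - 3)) *
        (Wxy * ENNReal.ofReal (∑ j ∈ Finset.range i, Δ ^ j))) :
    gdist (emulGraph G w A pv k) (gdist G w) x y ≤
        ENNReal.ofReal (3 + 8 / (Δ - 3)) *
          max (ENNReal.ofReal Δ * (Wxy * ENNReal.ofReal (∑ j ∈ Finset.range i, Δ ^ j)))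
            (gdist G w x y) ∨
      ((A (i + 1)).Nonempty ∧
        gdist (emulGraph G w A pv k) (gdist G w) x (pv (i + 1) x) ≤
          ENNReal.ofReal (2 * Δ / (Δ - 3)) *
            (Wxy * ENNReal.ofReal (∑ j ∈ Finset.range (i + 1), Δ ^ j))) := by
  have hA : IsPivotHierarchy G w k A pv :=
    ⟨hA0, hAnest, hAk, fun i hi v hv => (hpv i hi v hv).1, fun i hi v hv => (hpv i hi v hv).2⟩
  refine (emulDist_le_or_emulDist_pivot_succ_le hA hwsym hAi hpiv).imp
    (fun h => h.trans ?_) (And.imp_right fun h => h.trans ?_)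
  · exact three_mul_add_four_mul_le hΔ _ _
  · exact two_mul_add_three_mul_le hΔ i hclose

/-- Lemma B.1: with `D_{-1} = 0`, `D_i = W(x,y)·∑_{j=0}^{i} Δ^j`, if
`d_G(x,y) ≤ D_i` and `d_H(x,p_i(x)) ≤ (2Δ/(Δ-3))·D_{i-1}`, then with
`m = max{Δ·D_{i-1}, d_G(x,y)}`, either `d_H(x,y) ≤ (3 + 8/(Δ-3))·m`, or `A_{i+1} ≠ ∅` and
`d_H(x,p_{i+1}(x)) ≤ (2Δ/(Δ-3))·D_i`.  (Here the sum `∑ j ∈ Finset.range i, Δ^j` is `D_{i-1}`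
divided by `W(x,y)`, so that `D_{i-1} = 0` when `i = 0`.) -/
theorem statement8 [Fintype V] (G : SimpleGraph V) (hconn : G.Connected)
    (w : V → V → ℝ≥0∞) (hwsym : ∀ u v, G.Adj u v → w u v = w v u)
    (hwfin : ∀ u v, G.Adj u v → w u v ≠ ⊤)
    (k : ℕ) (hk : 1 ≤ k) (A : ℕ → Set V) (hA0 : A 0 = Set.univ)
    (hAnest : ∀ i, A (i + 1) ⊆ A i) (hAk : A k = ∅)
    (pv : ℕ → V → V)
    (hpv : ∀ i, i < k → ∀ v : V, (A i).Nonempty →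
      pv i v ∈ A i ∧ ∀ a ∈ A i, gdist G w v (pv i v) ≤ gdist G w v a)
    (Δ : ℝ) (hΔ : 3 < Δ) (x y : V) (Wxy : ℝ≥0∞)
    (hW : ∃ q : G.Walk x y, q.IsPath ∧ wWeight w q = gdist G w x y ∧ maxW w q = Wxy)
    (i : ℕ) (hi : i < k) (hAi : (A i).Nonempty)
    (hclose : gdist G w x y ≤ Wxy * ENNReal.ofReal (∑ j ∈ Finset.range (i + 1), Δ ^ j))
    (hpiv : gdist (emulGraph G w A pv k) (gdist G w) x (pv i x) ≤
      ENNReal.ofReal (2 * Δ / (Δ - 3)) *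
        (Wxy * ENNReal.ofReal (∑ j ∈ Finset.range i, Δ ^ j))) :
    gdist (emulGraph G w A pv k) (gdist G w) x y ≤
        ENNReal.ofReal (3 + 8 / (Δ - 3)) *
          max (ENNReal.ofReal Δ * (Wxy * ENNReal.ofReal (∑ j ∈ Finset.range i, Δ ^ j)))
            (gdist G w x y) ∨
      ((A (i + 1)).Nonempty ∧
        gdist (emulGraph G w A pv k) (gdist G w) x (pv (i + 1) x) ≤
          ENNReal.ofReal (2 * Δ / (Δ - 3)) *
            (Wxy * ENNReal.ofReal (∑ j ∈ Finset.range (i + 1), Δ ^ j))) :=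
  statement8_general G w hwsym k A hA0 hAnest hAk pv hpv Δ hΔ x y Wxy i hAi hclose hpiv

end ASP
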